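/- arXiv:1203.1273 — 9 statements merged into one kernel-verified Lean document; each statement's English description precedes it below -/
import Mathlib

section
/- Let b > 1, N > 1 with gcd(N,b)=1 and let d > 1 divide ord_N(b), with k = ord_N(b)/d. Suppose for every prime p dividing gcd(b^k − 1, N) one has ν_p(N) ≤ ν_p(d). If x ≡ b·y (mod N) for units x, y mod N, then S_d(x) ≡ S_d(y) mod (b^k − 1) is automatic; in particular, it suffices to verify the Midy divisibility (b^k − 1) | S_d(x) for one representative x of each cyclotomic coset of b acting on units mod N. -/
/-!
Both assertions follow from the stronger fact that, under the valuation hypothesis, `b ^ k - 1`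
divides `S_d(x)` for every `x`. Put `a = b ^ k` and `r_i = x a^i mod N`. Long division gives
`N S_d(x) = (a - 1) ∑_{i<d} r_i`, since the remainders are `d`-periodic, and
`∑_{i<d} r_i ≡ x (1 + a + ⋯ + a^(d-1)) ≡ 0 (mod N)`: a prime power of `N` coprime to `a - 1`
divides the geometric sum because `N ∣ (a - 1)(1 + a + ⋯ + a^(d-1))`, while for `p ∣ gcd(a - 1, N)`
the lifting-the-exponent lemma gives `ν_p(N) ≤ ν_p(d) ≤ ν_p(1 + a + ⋯ + a^(d-1))`.
-/

/-- Sum of the `d` blocks of length `k` of the base-`b` period of `x/N`. -/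
def midySum (b N k d x : ℕ) : ℕ :=
  ∑ j ∈ Finset.Icc 1 d, (x * b ^ (j * k) / N) % b ^ k

open Finset

lemma padicValNat_le_padicValNat_geom_sum {p a : ℕ} [hp : Fact p.Prime] (ha : 0 < a)
    (hpa : p ∣ a - 1) (d : ℕ) :
    padicValNat p d ≤ padicValNat p (∑ i ∈ range d, a ^ i) := by
  rcases Nat.eq_zero_or_pos d with rfl | hd
  · simp
  rcases Nat.one_le_of_lt ha |>.eq_or_lt with rfl | ha1
  · simp
  have hpa' : ¬ p ∣ a := fun h =>
    hp.out.not_dvd_one (by simpa [Nat.sub_sub_self ha] using Nat.dvd_sub h hpa)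
  have hgeom := geom_sum_mul_of_one_le ha1.le d
  have hpow : 1 < a ^ d := Nat.one_lt_pow hd.ne' ha1
  have hC : ∑ i ∈ range d, a ^ i ≠ 0 := by
    rintro h
    rw [h, zero_mul] at hgeom
    omega
  have hsplit : padicValNat p (a ^ d - 1) =
      padicValNat p (∑ i ∈ range d, a ^ i) + padicValNat p (a - 1) := by
    rw [← hgeom, padicValNat.mul hC (by omega)]
  rcases hp.out.eq_two_or_odd' with rfl | hodd
  · rcases Nat.even_or_odd d with heven | hodd_d
    · have hlte := padicValNat.pow_two_sub_one ha1 hpa' hd.ne' heven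
      have h2 : 1 ≤ padicValNat 2 (a + 1) :=
        one_le_padicValNat_of_dvd (by omega) (by omega)
      omega
    · simp [padicValNat.eq_zero_of_not_dvd hodd_d.not_two_dvd_nat]
  · have hlte := padicValNat.pow_sub_pow hodd ha1 (by simpa using hpa) hpa' hd.ne'
    rw [one_pow] at hlte
    omega

lemma dvd_geom_sum_of_padicValNat_le {N a d : ℕ} (hN : N ≠ 0) (ha : 0 < a)
    (hper : a ^ d ≡ 1 [MOD N])
    (hval : ∀ p, p.Prime → p ∣ Nat.gcd (a - 1) N → padicValNat p N ≤ padicValNat p d) :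
    N ∣ ∑ i ∈ range d, a ^ i := by
  have hprod : N ∣ (∑ i ∈ range d, a ^ i) * (a - 1) := by
    rw [geom_sum_mul_of_one_le ha]
    exact (Nat.modEq_iff_dvd' (Nat.one_le_pow _ _ ha)).mp hper.symm
  rw [Nat.dvd_iff_prime_pow_dvd_dvd]
  intro p j hp hpj
  by_cases hpa : p ∣ a - 1
  · rcases j with _ | j
    · simp
    have : Fact p.Prime := ⟨hp⟩
    have hpN : p ∣ N := (dvd_pow_self p j.succ_ne_zero).trans hpj
    have hj : j + 1 ≤ padicValNat p (∑ i ∈ range d, a ^ i) :=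
      ((padicValNat_dvd_iff_le hN).mp hpj).trans <|
        (hval p hp (Nat.dvd_gcd hpa hpN)).trans (padicValNat_le_padicValNat_geom_sum ha hpa d)
    exact (pow_dvd_pow p hj).trans pow_padicValNat_dvd
  · exact (Nat.Coprime.pow_left j ((Nat.Prime.coprime_iff_not_dvd hp).mpr hpa)).dvd_of_dvd_mul_right
      (hpj.trans hprod)

/-- One step of the long division of `a / N` in base `m`. -/
lemma mul_div_mod_add_mul_mod (N m a : ℕ) : N * (a * m / N % m) + a * m % N = m * (a % N) := by
  rw [← Nat.mod_mul_right_div_self, Nat.mul_mod_mul_right, ← Nat.mod_mul_mod, Nat.div_add_mod,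
    mul_comm]

lemma mul_midySum_eq {b N k d : ℕ} (hper : (b ^ k) ^ d ≡ 1 [MOD N]) (x : ℕ) :
    N * midySum b N k d x = (b ^ k - 1) * ∑ i ∈ range d, x * (b ^ k) ^ i % N := by
  set a := b ^ k
  set r : ℕ → ℕ := fun i => x * a ^ i % N
  have hstep (i : ℕ) : N * (x * b ^ ((1 + i) * k) / N % a) + r (i + 1) = a * r i := by
    have hexp : x * b ^ ((1 + i) * k) = x * a ^ i * a := by
      rw [mul_comm (1 + i) k, pow_mul, add_comm, pow_succ, mul_assoc]
    rw [hexp, show r (i + 1) = x * a ^ i * a % N by simp only [r, pow_succ, mul_assoc]]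
    exact mul_div_mod_add_mul_mod N a (x * a ^ i)
  have hsum : N * midySum b N k d x + ∑ i ∈ range d, r (i + 1) = a * ∑ i ∈ range d, r i := by
    rw [midySum, ← Finset.Ico_add_one_right_eq_Icc, Finset.sum_Ico_eq_sum_range,
      Nat.add_sub_cancel, Finset.mul_sum, Finset.mul_sum, ← Finset.sum_add_distrib]
    exact Finset.sum_congr rfl fun i _ => hstep i
  have hperiodic : r d = r 0 := by
    have h : x * a ^ d ≡ x * 1 [MOD N] := hper.mul_left x
    simpa [r, Nat.ModEq] using h
  have hshift : ∑ i ∈ range d, r (i + 1) = ∑ i ∈ range d, r i := by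
    have h1 : ∑ i ∈ range (d + 1), r i = ∑ i ∈ range d, r i + r d := sum_range_succ r d
    have h2 : ∑ i ∈ range (d + 1), r i = ∑ i ∈ range d, r (i + 1) + r 0 := sum_range_succ' r d
    omega
  rw [hshift] at hsum
  change _ = (a - 1) * ∑ i ∈ range d, r i
  rw [Nat.sub_one_mul]
  omega

lemma sub_one_dvd_midySum {b N k d : ℕ} (hN : 0 < N) (hper : (b ^ k) ^ d ≡ 1 [MOD N])
    (hgeom : N ∣ ∑ i ∈ range d, (b ^ k) ^ i) (x : ℕ) :
    b ^ k - 1 ∣ midySum b N k d x := by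
  obtain ⟨u, hu⟩ : N ∣ ∑ i ∈ range d, x * (b ^ k) ^ i % N := by
    rw [Nat.dvd_iff_mod_eq_zero, ← Finset.sum_nat_mod, ← Finset.mul_sum, Nat.mul_mod,
      Nat.mod_eq_zero_of_dvd hgeom, mul_zero, Nat.zero_mod]
  refine ⟨u, Nat.eq_of_mul_eq_mul_left hN ?_⟩
  rw [mul_midySum_eq hper, hu, mul_left_comm]

theorem stmt2_general (b N d k : ℕ) (hb : 1 < b) (hN : 1 < N)
    (hord : orderOf (b : ZMod N) = d * k)
    (hval : ∀ p, p.Prime → p ∣ Nat.gcd (b ^ k - 1) N →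
      padicValNat p N ≤ padicValNat p d) :
    (∀ x y, 0 < x → x < N → Nat.Coprime x N → 0 < y → y < N → Nat.Coprime y N →
        x ≡ b * y [MOD N] → midySum b N k d x ≡ midySum b N k d y [MOD b ^ k - 1]) ∧
    (∀ R : Finset ℕ,
        (∀ x, 0 < x → x < N → Nat.Coprime x N → ∃ r ∈ R, ∃ i : ℕ, x ≡ b ^ i * r [MOD N]) →
        (∀ r ∈ R, 0 < r ∧ r < N ∧ Nat.Coprime r N) →
        (∀ r ∈ R, (b ^ k - 1) ∣ midySum b N k d r) →
        ∀ x, 0 < x → x < N → Nat.Coprime x N → (b ^ k - 1) ∣ midySum b N k d x) := by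
  have hper : (b ^ k) ^ d ≡ 1 [MOD N] := by
    rw [← ZMod.natCast_eq_natCast_iff, Nat.cast_pow, Nat.cast_pow, Nat.cast_one, ← pow_mul,
      mul_comm, ← hord, pow_orderOf_eq_one]
  have hmidy : ∀ x, b ^ k - 1 ∣ midySum b N k d x :=
    sub_one_dvd_midySum (by omega) hper
      (dvd_geom_sum_of_padicValNat_le (by omega) (by positivity) hper hval)
  refine ⟨fun x y _ _ _ _ _ _ _ => ?_, fun _ _ _ _ x _ _ _ => hmidy x⟩
  exact (Nat.modEq_zero_iff_dvd.mpr (hmidy x)).trans (Nat.modEq_zero_iff_dvd.mpr (hmidy y)).symm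

/-- under the Midy valuation hypothesis, if `x ≡ b·y (mod N)` for units
`x, y` mod `N` then `S_d(x) ≡ S_d(y) (mod b^k − 1)`; so the Midy divisibility need only
be checked on one representative of each cyclotomic coset of `b` acting on units mod `N`. -/
theorem stmt2 (b N d k : ℕ) (hb : 1 < b) (hN : 1 < N) (hco : Nat.Coprime N b)
    (hd : 1 < d) (hk : 0 < k) (hord : orderOf (b : ZMod N) = d * k)
    (hval : ∀ p, p.Prime → p ∣ Nat.gcd (b ^ k - 1) N →
      padicValNat p N ≤ padicValNat p d) :
    (∀ x y, 0 < x → x < N → Nat.Coprime x N → 0 < y → y < N → Nat.Coprime y N →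
        x ≡ b * y [MOD N] → midySum b N k d x ≡ midySum b N k d y [MOD b ^ k - 1]) ∧
    (∀ R : Finset ℕ,
        (∀ x, 0 < x → x < N → Nat.Coprime x N → ∃ r ∈ R, ∃ i : ℕ, x ≡ b ^ i * r [MOD N]) →
        (∀ r ∈ R, 0 < r ∧ r < N ∧ Nat.Coprime r N) →
        (∀ r ∈ R, (b ^ k - 1) ∣ midySum b N k d r) →
        ∀ x, 0 < x → x < N → Nat.Coprime x N → (b ^ k - 1) ∣ midySum b N k d x) :=
  stmt2_general b N d k hb hN hord hval
end

section
/- Let N > 1, b > 1 with gcd(N,b)=1, and let d divide ord_N(b) with k = ord_N(b)/d. Then the Midy condition 'ν_p(N) ≤ ν_p(d) for all primes p dividing gcd(b^k − 1, N)' holds if and only if: for each prime p dividing N with ν_p(N) > ν_p(d), there exists a prime q such that ν_q(ord_p(b)) > ν_q(ord_N(b)) − ν_q(d). -/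
/-- `d ∈ M_b(N)`: for every prime `p` dividing `gcd(b^{ord_N(b)/d} − 1, N)`,
`ν_p(N) ≤ ν_p(d)`. -/
def MidyProp (b N d : ℕ) : Prop :=
  ∀ p : ℕ, p.Prime → p ∣ Nat.gcd (b ^ (orderOf (b : ZMod N) / d) - 1) N →
    padicValNat p N ≤ padicValNat p d

private lemma val_le_of_dvd {a c : ℕ} (h : a ∣ c) (hc : c ≠ 0) (q : ℕ) (hq : q.Prime) :
    padicValNat q a ≤ padicValNat q c := by
  rcases Nat.eq_zero_or_pos a with rfl | ha
  · exact absurd (zero_dvd_iff.mp h) hc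
  · have := (Nat.factorization_le_iff_dvd ha.ne' hc).mpr h q
    rwa [Nat.factorization_def _ hq, Nat.factorization_def _ hq] at this

/-- `d ∈ M_b(N)` iff for each prime `p ∣ N` with `ν_p(N) > ν_p(d)` there is a
prime `q` with `ν_q(ord_p(b)) > ν_q(ord_N(b)) − ν_q(d)`. -/
theorem stmt3 (b N d : ℕ) (hb : 1 < b) (hN : 1 < N) (hco : Nat.Coprime N b)
    (hdvd : d ∣ orderOf (b : ZMod N)) :
    MidyProp b N d ↔
      ∀ p, p.Prime → p ∣ N → padicValNat p d < padicValNat p N →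
        ∃ q : ℕ, q.Prime ∧
          padicValNat q (orderOf (b : ZMod N)) - padicValNat q d <
            padicValNat q (orderOf (b : ZMod p)) := by
  have hN0 : N ≠ 0 := by omega
  set E := orderOf (b : ZMod N) with hE
  have hEpos : 0 < E := by
    have h1 : (b : ZMod N) ^ N.totient = 1 := by
      have h := (ZMod.natCast_eq_natCast_iff _ _ N).mpr (Nat.ModEq.pow_totient hco.symm)
      simpa using h
    exact orderOf_pos_iff.mpr (isOfFinOrder_iff_pow_eq_one.mpr
      ⟨N.totient, Nat.totient_pos.mpr (by omega), h1⟩)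
  have hd0 : d ≠ 0 := by rintro rfl; simp [zero_dvd_iff] at hdvd; omega
  set k := E / d with hk
  have hk0 : k ≠ 0 := (Nat.div_pos (Nat.le_of_dvd hEpos hdvd) (Nat.pos_of_ne_zero hd0)).ne'
  have hbk1 : 1 ≤ b ^ k := Nat.one_le_pow _ _ (by omega)
  -- key: for prime p, p ∣ b^k - 1 ↔ orderOf (b : ZMod p) ∣ k
  have key : ∀ p : ℕ, p.Prime → p ∣ N → (p ∣ b ^ k - 1 ↔ orderOf (b : ZMod p) ∣ k) := by
    intro p hp hpN
    have : (p ∣ b ^ k - 1) ↔ (b : ZMod p) ^ k = 1 := by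
      rw [← Nat.modEq_iff_dvd' hbk1, Nat.ModEq.comm, ← ZMod.natCast_eq_natCast_iff]
      push_cast
      rfl
    rw [this, orderOf_dvd_iff_pow_eq_one]
  -- valuations of k
  have hvk : ∀ q : ℕ, q.Prime → padicValNat q k = padicValNat q E - padicValNat q d := by
    intro q hq
    haveI : Fact q.Prime := ⟨hq⟩
    exact padicValNat.div_of_dvd hdvd
  constructor
  · intro hM p hp hpN hlt
    have hpb : ¬ p ∣ b ^ k - 1 := by
      intro h
      exact absurd (hM p hp (Nat.dvd_gcd h hpN)) (by omega)
    have hord : ¬ orderOf (b : ZMod p) ∣ k := fun h => hpb ((key p hp hpN).mpr h)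
    haveI : Fact p.Prime := ⟨hp⟩
    have hcop : Nat.Coprime p b := hco.coprime_dvd_left hpN
    have hbz : (b : ZMod p) ≠ 0 := by
      rw [Ne, ZMod.natCast_eq_zero_iff]
      exact (Nat.Prime.coprime_iff_not_dvd hp).mp hcop
    have hOpos : 0 < orderOf (b : ZMod p) :=
      orderOf_pos_iff.mpr (isOfFinOrder_iff_pow_eq_one.mpr
        ⟨p - 1, by have := hp.two_le; omega, ZMod.pow_card_sub_one_eq_one hbz⟩)
    have hnle : ¬ (orderOf (b : ZMod p)).factorization ≤ k.factorization := by
      intro h; exact hord ((Nat.factorization_le_iff_dvd hOpos.ne' hk0).mp h)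
    rw [Finsupp.le_def] at hnle
    push_neg at hnle
    obtain ⟨q, hq⟩ := hnle
    have hqp : q.Prime := by
      by_contra h
      rw [Nat.factorization_eq_zero_of_not_prime (orderOf (b : ZMod p)) h] at hq
      omega
    refine ⟨q, hqp, ?_⟩
    rw [Nat.factorization_def _ hqp, Nat.factorization_def _ hqp] at hq
    rw [← hvk q hqp]
    exact hq
  · intro hR p hp hpgcd
    by_contra hlt
    push_neg at hlt
    have hpN : p ∣ N := hpgcd.trans (Nat.gcd_dvd_right _ _)
    obtain ⟨q, hq, hqlt⟩ := hR p hp hpN hlt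
    have hord : orderOf (b : ZMod p) ∣ k :=
      (key p hp hpN).mp (hpgcd.trans (Nat.gcd_dvd_left _ _))
    have := val_le_of_dvd hord hk0 q hq
    rw [hvk q hq] at this
    omega
end

section
/- Let N > 1, b > 1 with gcd(N,b)=1. If d₁ and d₂ are divisors of ord_N(b) with d₁ | d₂ and d₁ ∈ M_b(N), then d₂ ∈ M_b(N). -/
set_option maxHeartbeats 1000000 in
/-- if `d₁ ∣ d₂` are divisors of `ord_N(b)` and `d₁ ∈ M_b(N)`,
then `d₂ ∈ M_b(N)`. -/
theorem stmt4 (b N d₁ d₂ : ℕ) (hb : 1 < b) (hN : 1 < N) (hco : Nat.Coprime N b)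
    (h1 : d₁ ∣ orderOf (b : ZMod N)) (h2 : d₂ ∣ orderOf (b : ZMod N))
    (h12 : d₁ ∣ d₂) (hM : MidyProp b N d₁) : MidyProp b N d₂ := by
  intro p hp hpd
  have : NeZero N := ⟨by omega⟩
  have hbu : IsUnit (b : ZMod N) := (ZMod.isUnit_iff_coprime b N).2 (hco.symm)
  have he : 0 < orderOf (b : ZMod N) := by rw [← hbu.unit_spec, orderOf_units]; exact orderOf_pos _
  have hd₁ : d₁ ≠ 0 := by rintro rfl; exact he.ne' (Nat.eq_zero_of_zero_dvd h1)
  have hd₂ : d₂ ≠ 0 := by rintro rfl; exact he.ne' (Nat.eq_zero_of_zero_dvd h2)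
  -- e/d₂ divides e/d₁
  have hdiv : orderOf (b : ZMod N) / d₂ ∣ orderOf (b : ZMod N) / d₁ :=
    by
    obtain ⟨m, hm⟩ := h12
    obtain ⟨k, hk⟩ := h2
    subst hm
    rw [hk, Nat.mul_div_cancel_left k (Nat.pos_of_ne_zero hd₂), Nat.mul_assoc,
      Nat.mul_div_cancel_left _ (Nat.pos_of_ne_zero hd₁)]
    exact Dvd.intro_left m rfl
  obtain ⟨m, hm⟩ := hdiv
  have hsub : b ^ (orderOf (b : ZMod N) / d₂) - 1 ∣ b ^ (orderOf (b : ZMod N) / d₁) - 1 := by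
    rw [hm, pow_mul]
    simpa using Nat.sub_dvd_pow_sub_pow (b ^ (orderOf (b : ZMod N) / d₂)) 1 m
  have hp1 : p ∣ Nat.gcd (b ^ (orderOf (b : ZMod N) / d₁) - 1) N :=
    Nat.dvd_gcd ((Nat.dvd_gcd_iff.1 hpd).1.trans hsub) (Nat.dvd_gcd_iff.1 hpd).2
  refine (hM p hp hp1).trans ?_
  haveI : Fact p.Prime := ⟨hp⟩
  rw [← padicValNat_dvd_iff_le hd₂]
  exact pow_padicValNat_dvd.trans h12
end

section
/- Let N > 1, b > 1 with gcd(N,b)=1 and ord_N(b) = k·d with d > 1. Suppose that for every prime p dividing N one has ν_p(N) > ν_p(d). Then the following are equivalent: (1) gcd(b^k − 1, N) = 1; (2) d ∈ M_b(N); (3) for each prime p dividing N there exists a prime q dividing d with ν_q(ord_p(b)) > ν_q(ord_N(b)) − ν_q(d). -/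
/-- if `ν_p(N) > ν_p(d)` for every prime `p ∣ N`, then
`gcd(b^k−1, N) = 1`, `d ∈ M_b(N)` and the prime-`q` criterion are all equivalent. -/
theorem stmt6 (b N d k : ℕ) (hb : 1 < b) (hN : 1 < N) (hco : Nat.Coprime N b)
    (hd : 1 < d) (hord : orderOf (b : ZMod N) = k * d)
    (hval : ∀ p, p.Prime → p ∣ N → padicValNat p d < padicValNat p N) :
    (Nat.gcd (b ^ k - 1) N = 1 ↔ MidyProp b N d) ∧
    (MidyProp b N d ↔
      ∀ p, p.Prime → p ∣ N →
        ∃ q : ℕ, q.Prime ∧ q ∣ d ∧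
          padicValNat q (orderOf (b : ZMod N)) - padicValNat q d <
            padicValNat q (orderOf (b : ZMod p))) := by
  haveI : NeZero N := ⟨by omega⟩
  -- order is positive
  have hnpos : 0 < orderOf (b : ZMod N) := by
    have := ZMod.coe_unitOfCoprime b hco.symm
    rw [← this, orderOf_units]
    exact orderOf_pos _
  have hk0 : k ≠ 0 := by
    rintro rfl; rw [hord] at hnpos; simp at hnpos
  have hd0 : d ≠ 0 := by omega
  have hdiv : orderOf (b : ZMod N) / d = k := by
    rw [hord, Nat.mul_div_cancel _ (by omega)]
  -- order of b mod p divides the order mod N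
  have horddvd : ∀ p : ℕ, p ∣ N → orderOf (b : ZMod p) ∣ orderOf (b : ZMod N) := by
    intro p hpN
    have : (b : ZMod p) = (ZMod.castHom hpN (ZMod p)) (b : ZMod N) := (map_natCast _ b).symm
    rw [this]
    exact orderOf_map_dvd _ _
  -- key: p ∣ b^k - 1 ↔ ord_p(b) ∣ k
  have hkey : ∀ p : ℕ, p.Prime → p ∣ N → (p ∣ b ^ k - 1 ↔ orderOf (b : ZMod p) ∣ k) := by
    intro p hp hpN
    haveI : NeZero p := ⟨hp.ne_zero⟩
    have hb1 : 1 ≤ b ^ k := Nat.one_le_pow _ _ (by omega)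
    rw [← ZMod.natCast_eq_zero_iff, Nat.cast_sub hb1, Nat.cast_pow, Nat.cast_one,
      sub_eq_zero, ← orderOf_dvd_iff_pow_eq_one]
  -- order of b mod p is positive for p prime dividing N
  have hepos : ∀ p : ℕ, p.Prime → p ∣ N → 0 < orderOf (b : ZMod p) := by
    intro p hp hpN
    haveI : NeZero p := ⟨hp.ne_zero⟩
    have hcop : Nat.Coprime b p := (Nat.Coprime.coprime_dvd_left hpN hco).symm
    have := ZMod.coe_unitOfCoprime b hcop
    rw [← this, orderOf_units]
    haveI : Fact p.Prime := ⟨hp⟩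
    exact orderOf_pos _
  have hnu : ∀ q : ℕ, q.Prime →
      padicValNat q (orderOf (b : ZMod N)) - padicValNat q d = padicValNat q k := by
    intro q hq
    haveI : Fact q.Prime := ⟨hq⟩
    rw [hord, padicValNat.mul hk0 hd0]
    omega
  have iff1 : Nat.gcd (b ^ k - 1) N = 1 ↔ MidyProp b N d := by
    constructor
    · intro h p hp hpdvd
      rw [hdiv, h] at hpdvd
      exact absurd (Nat.le_of_dvd one_pos hpdvd) hp.one_lt.not_ge
    · intro h
      by_contra hg
      obtain ⟨p, hp, hpdvd⟩ := Nat.exists_prime_and_dvd hg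
      have hpN : p ∣ N := hpdvd.trans (Nat.gcd_dvd_right _ _)
      have := h p hp (by rwa [hdiv])
      exact absurd (hval p hp hpN) (by omega)
  refine ⟨iff1, iff1.symm.trans ?_⟩
  constructor
  · intro h p hp hpN
    set e := orderOf (b : ZMod p) with he
    have he0 : e ≠ 0 := (hepos p hp hpN).ne'
    have hek : ¬ e ∣ k := by
      intro hek
      have hpd : p ∣ Nat.gcd (b ^ k - 1) N :=
        Nat.dvd_gcd ((hkey p hp hpN).mpr hek) hpN
      rw [h] at hpd
      exact absurd (Nat.le_of_dvd one_pos hpd) hp.one_lt.not_ge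
    rw [← Nat.factorization_le_iff_dvd he0 hk0, Finsupp.le_def] at hek
    push_neg at hek
    obtain ⟨q, hq⟩ := hek
    have hqprime : q.Prime := by
      by_contra hqp
      rw [Nat.factorization_eq_zero_of_not_prime e hqp] at hq
      omega
    haveI : Fact q.Prime := ⟨hqprime⟩
    rw [Nat.factorization_def k hqprime, Nat.factorization_def e hqprime] at hq
    have hle : padicValNat q e ≤ padicValNat q k + padicValNat q d := by
      calc padicValNat q e ≤ padicValNat q (orderOf (b : ZMod N)) := by
            rw [← Nat.factorization_def _ hqprime, ← Nat.factorization_def _ hqprime]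
            exact (Nat.factorization_le_iff_dvd he0 hnpos.ne').mpr (horddvd p hpN) q
        _ = padicValNat q k + padicValNat q d := by rw [hord, padicValNat.mul hk0 hd0]
    have hqd : q ∣ d := dvd_of_one_le_padicValNat (by omega)
    exact ⟨q, hqprime, hqd, by rw [hnu q hqprime]; omega⟩
  · intro h
    by_contra hg
    obtain ⟨p, hp, hpdvd⟩ := Nat.exists_prime_and_dvd hg
    have hpN : p ∣ N := hpdvd.trans (Nat.gcd_dvd_right _ _)
    obtain ⟨q, hq, hqd, hlt⟩ := h p hp hpN
    have hek : orderOf (b : ZMod p) ∣ k :=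
      (hkey p hp hpN).mp (hpdvd.trans (Nat.gcd_dvd_left _ _))
    rw [hnu q hq] at hlt
    have : padicValNat q (orderOf (b : ZMod p)) ≤ padicValNat q k := by
      rw [← Nat.factorization_def _ hq, ← Nat.factorization_def _ hq]
      exact (Nat.factorization_le_iff_dvd (hepos p hp hpN).ne' hk0).mpr hek q
    omega
end

section
/- Let q be a prime, v ≥ 1, and let N > 1 with gcd(N,b)=1, b > 1, and q^v dividing ord_N(b). Write ord_N(b) = q^t·k with gcd(q,k)=1 (so t ≥ v). Then q^v ∈ M_b(N) if and only if N = q^n·p₁^{h₁}···p_l^{h_l} with distinct primes p_i ≠ q, 0 ≤ n ≤ v, ν_q(ord_{p_i}(b)) > 0 for all i, and max{n − m, max_i ν_q(ord_{p_i}(b))} − v < min_i ν_q(ord_{p_i}(b)), where m = ν_q(b^{ord_q(b)} − 1). -/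
open Finset

theorem natCast_dvd_pow_sub_one_iff_orderOf_dvd {M b e : ℕ} :
    (M : ℤ) ∣ (b : ℤ) ^ e - 1 ↔ orderOf (b : ZMod M) ∣ e := by
  rw [← ZMod.intCast_zmod_eq_zero_iff_dvd, orderOf_dvd_iff_pow_eq_one]
  push_cast
  exact sub_eq_zero

theorem dvd_pow_sub_one_iff_orderOf_dvd {M b e : ℕ} (hb : 0 < b) :
    M ∣ b ^ e - 1 ↔ orderOf (b : ZMod M) ∣ e := by
  rw [← natCast_dvd_pow_sub_one_iff_orderOf_dvd, ← Int.natCast_dvd_natCast,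
    Nat.cast_sub (Nat.one_le_pow _ _ hb)]
  push_cast
  rfl

theorem orderOf_natCast_dvd_of_dvd {M N b : ℕ} (h : M ∣ N) :
    orderOf (b : ZMod M) ∣ orderOf (b : ZMod N) := by
  simpa using orderOf_map_dvd (ZMod.castHom h (ZMod M)).toMonoidHom (b : ZMod N)

theorem orderOf_natCast_ne_zero {M b : ℕ} (hM : M ≠ 0) (hb : b.Coprime M) :
    orderOf (b : ZMod M) ≠ 0 := by
  have : NeZero M := ⟨hM⟩
  rw [← ZMod.coe_unitOfCoprime b hb, orderOf_units]
  exact (orderOf_pos _).ne'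

theorem orderOf_natCast_dvd_of_forall_prime_pow {N b e : ℕ} (hb : 0 < b)
    (h : ∀ p j, p.Prime → 0 < j → p ^ j ∣ N → orderOf (b : ZMod (p ^ j)) ∣ e) :
    orderOf (b : ZMod N) ∣ e := by
  rw [← dvd_pow_sub_one_iff_orderOf_dvd hb, Nat.dvd_iff_prime_pow_dvd_dvd]
  intro p j hp hpj
  rcases j.eq_zero_or_pos with rfl | hj
  · exact (pow_zero p).symm ▸ one_dvd _
  · exact (dvd_pow_sub_one_iff_orderOf_dvd hb).2 (h p j hp hj hpj)

section padicValNat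

variable {q : ℕ} [hq : Fact q.Prime]

theorem padicValNat_le_of_dvd {a c : ℕ} (hc : c ≠ 0) (h : a ∣ c) :
    padicValNat q a ≤ padicValNat q c :=
  (padicValNat_dvd_iff_le hc).1 (pow_padicValNat_dvd.trans h)

theorem padicValNat_pow_mul_of_not_dvd {t k : ℕ} (hqk : ¬ q ∣ k) :
    padicValNat q (q ^ t * k) = t := by
  rw [padicValNat.mul (pow_ne_zero _ hq.out.ne_zero) (by rintro rfl; exact hqk (dvd_zero q)),
    padicValNat.prime_pow, padicValNat.eq_zero_of_not_dvd hqk, add_zero]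

theorem dvd_pow_mul_iff_padicValNat_le {o t k s : ℕ} (hqk : ¬ q ∣ k) (ho : o ∣ q ^ t * k) :
    o ∣ q ^ s * k ↔ padicValNat q o ≤ s := by
  have hk : k ≠ 0 := by rintro rfl; exact hqk (dvd_zero q)
  have ho0 : o ≠ 0 := by rintro rfl; simp [hk, hq.out.ne_zero] at ho
  obtain ⟨e, c, hqc, rfl⟩ := Nat.exists_eq_pow_mul_and_not_dvd ho0 q hq.out.ne_one
  rw [padicValNat_pow_mul_of_not_dvd hqc]
  constructor
  · intro h
    simpa [padicValNat_pow_mul_of_not_dvd hqk, padicValNat_pow_mul_of_not_dvd hqc] using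
      padicValNat_le_of_dvd (q := q) (by simp [hk, hq.out.ne_zero]) h
  · intro hes
    have hcq : c.Coprime (q ^ t) := ((Nat.Prime.coprime_iff_not_dvd hq.out).2 hqc).symm.pow_right t
    exact mul_dvd_mul (pow_dvd_pow q hes) (hcq.dvd_of_dvd_mul_left ((dvd_mul_left c _).trans ho))

end padicValNat

theorem pow_add_dvd_pow_pow_sub_one {R : Type*} [CommRing R] {p m : ℕ} {x : R}
    (hp : (p : R) ∣ x - 1) (hm : (p : R) ^ m ∣ x - 1) (s : ℕ) :
    (p : R) ^ (m + s) ∣ x ^ p ^ s - 1 := by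
  induction s with
  | zero => simpa using hm
  | succ s ih =>
    have hps : (p : R) ∣ x ^ p ^ s - 1 := hp.trans (sub_one_dvd_pow_sub_one x _)
    have hfac : x ^ p ^ (s + 1) - 1 =
        (x ^ p ^ s - 1) * ∑ i ∈ range p, (x ^ p ^ s) ^ i * 1 ^ (p - 1 - i) := by
      rw [mul_comm, geom_sum₂_mul, one_pow, pow_succ, pow_mul]
    rw [hfac, ← add_assoc, pow_succ]
    exact mul_dvd_mul ih (dvd_geom_sum₂_self hps)

theorem orderOf_natCast_pow_dvd {p b : ℕ} (j : ℕ) :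
    orderOf (b : ZMod (p ^ j)) ∣ p ^ (j - 1) * orderOf (b : ZMod p) := by
  rcases j with _ | j
  · have h1 : orderOf (b : ZMod (p ^ 0)) = 1 :=
      orderOf_eq_one_iff.2 (Subsingleton.elim (α := ZMod 1) _ _)
    rw [h1]
    exact one_dvd _
  · rw [← natCast_dvd_pow_sub_one_iff_orderOf_dvd, Nat.add_sub_cancel, mul_comm, pow_mul]
    simpa using dvd_sub_pow_of_dvd_sub (p := p) (b := 1)
      (natCast_dvd_pow_sub_one_iff_orderOf_dvd.2 dvd_rfl) j

section orderOf

variable {q b : ℕ} [hq : Fact q.Prime]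

theorem padicValNat_orderOf_pow_le {r : ℕ} (hqr : ¬ q ∣ r) (hbr : b.Coprime r) (j : ℕ) :
    padicValNat q (orderOf (b : ZMod (r ^ j))) ≤ padicValNat q (orderOf (b : ZMod r)) := by
  have hr : r ≠ 0 := by rintro rfl; exact hqr (dvd_zero q)
  have hord := orderOf_natCast_ne_zero hr hbr
  calc _ ≤ padicValNat q (r ^ (j - 1) * orderOf (b : ZMod r)) :=
        padicValNat_le_of_dvd (mul_ne_zero (pow_ne_zero _ hr) hord) (orderOf_natCast_pow_dvd j)
    _ = _ := by
      rw [padicValNat.mul (pow_ne_zero _ hr) hord,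
        padicValNat.eq_zero_of_not_dvd fun h => hqr (hq.out.dvd_of_dvd_pow h), zero_add]

theorem orderOf_natCast_ne_zero_of_not_dvd (hqb : ¬ q ∣ b) : orderOf (b : ZMod q) ≠ 0 :=
  orderOf_natCast_ne_zero hq.out.ne_zero ((Nat.Prime.coprime_iff_not_dvd hq.out).2 hqb).symm

theorem not_dvd_orderOf_natCast (hqb : ¬ q ∣ b) : ¬ q ∣ orderOf (b : ZMod q) := by
  have hb : (b : ZMod q) ≠ 0 := by rwa [Ne, ZMod.natCast_eq_zero_iff]
  have hle := Nat.le_of_dvd (n := q - 1) (by have := hq.out.two_le; omega)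
    (ZMod.orderOf_dvd_card_sub_one hb)
  have hlt : orderOf (b : ZMod q) < q := lt_of_le_of_lt hle (Nat.sub_lt hq.out.pos one_pos)
  exact Nat.not_dvd_of_pos_of_lt
    (Nat.pos_of_ne_zero (orderOf_natCast_ne_zero_of_not_dvd hqb)) hlt

theorem padicValNat_orderOf_prime_pow_le_sub (hqb : ¬ q ∣ b) (n : ℕ) :
    padicValNat q (orderOf (b : ZMod (q ^ n))) ≤
      n - padicValNat q (b ^ orderOf (b : ZMod q) - 1) := by
  set o := orderOf (b : ZMod q)
  set m := padicValNat q (b ^ o - 1)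
  set g := padicValNat q (orderOf (b : ZMod (q ^ n)))
  by_contra hlt
  have hb : 0 < b := Nat.pos_of_ne_zero (by rintro rfl; exact hqb (dvd_zero q))
  have hm : (q : ℤ) ^ m ∣ (b : ℤ) ^ o - 1 := by
    have := Int.natCast_dvd_natCast.2 (pow_padicValNat_dvd (p := q) (n := b ^ o - 1))
    rwa [Nat.cast_sub (Nat.one_le_pow _ _ hb)] at this
  have h1 : (q : ℤ) ∣ (b : ℤ) ^ o - 1 := natCast_dvd_pow_sub_one_iff_orderOf_dvd.2 dvd_rfl
  -- lifting the exponent `g - 1` times from `q ^ m ∣ b ^ o - 1`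
  have hdvd : ((q ^ n : ℕ) : ℤ) ∣ (b : ℤ) ^ (q ^ (g - 1) * o) - 1 := by
    rw [mul_comm, pow_mul]
    push_cast
    exact (pow_dvd_pow _ (by omega)).trans (pow_add_dvd_pow_pow_sub_one h1 hm (g - 1))
  have := (dvd_pow_mul_iff_padicValNat_le (not_dvd_orderOf_natCast hqb)
    (orderOf_natCast_pow_dvd n)).1 (natCast_dvd_pow_sub_one_iff_orderOf_dvd.1 hdvd)
  omega

theorem one_le_padicValNat_pow_orderOf_sub_one (hb : 1 < b) (hqb : ¬ q ∣ b) :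
    1 ≤ padicValNat q (b ^ orderOf (b : ZMod q) - 1) := by
  have := Nat.one_lt_pow (orderOf_natCast_ne_zero_of_not_dvd hqb) hb
  exact one_le_padicValNat_of_dvd (by omega)
    ((dvd_pow_sub_one_iff_orderOf_dvd (by omega)).2 dvd_rfl)

end orderOf

theorem padicValNat_pos_of_mem_primeFactors {p N : ℕ} (hp : p ∈ N.primeFactors) :
    0 < padicValNat p N := by
  obtain ⟨hpp, hpN, hN⟩ := Nat.mem_primeFactors.1 hp
  have : Fact p.Prime := ⟨hpp⟩
  exact one_le_padicValNat_of_dvd hN hpN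

theorem eq_pow_padicValNat_mul_prod_erase {N q : ℕ} (hq : q.Prime) (hN : N ≠ 0) :
    N = q ^ padicValNat q N * ∏ p ∈ N.primeFactors.erase q, p ^ padicValNat p N := by
  have hprod : ∏ p ∈ N.primeFactors.erase q, p ^ padicValNat p N =
      ∏ p ∈ N.primeFactors.erase q, p ^ N.factorization p :=
    prod_congr rfl fun p hp => by
      rw [Nat.factorization_def N (Nat.prime_of_mem_primeFactors (mem_of_mem_erase hp))]
  rw [hprod, ← Nat.factorization_def N hq]
  by_cases hqN : q ∈ N.primeFactors
  · rw [mul_prod_erase _ (fun p => p ^ N.factorization p) hqN,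
      ← Nat.prod_primeFactors_pow_factorization hN]
  · rw [Finsupp.notMem_support_iff.1 (by rwa [Nat.support_factorization]), pow_zero, one_mul,
      erase_eq_of_notMem hqN, ← Nat.prod_primeFactors_pow_factorization hN]

theorem mem_of_prime_dvd_prod_pow {S : Finset ℕ} {h : ℕ → ℕ} {p : ℕ} (hS : ∀ r ∈ S, r.Prime)
    (hp : p.Prime) (hdvd : p ∣ ∏ r ∈ S, r ^ h r) : p ∈ S := by
  obtain ⟨r, hr, hpr⟩ := (Prime.dvd_finsetProd_iff hp.prime _).1 hdvd
  rwa [(Nat.prime_dvd_prime_iff_eq hp (hS r hr)).1 (hp.dvd_of_dvd_pow hpr)]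

theorem mem_of_prime_dvd_pow_mul_prod {S : Finset ℕ} {h : ℕ → ℕ} {p q n : ℕ} (hq : q.Prime)
    (hS : ∀ r ∈ S, r.Prime) (hp : p.Prime) (hpq : p ≠ q) (hdvd : p ∣ q ^ n * ∏ r ∈ S, r ^ h r) :
    p ∈ S :=
  mem_of_prime_dvd_prod_pow hS hp <| (hp.dvd_mul.1 hdvd).resolve_left fun hpqn =>
    hpq ((Nat.prime_dvd_prime_iff_eq hp hq).1 (hp.dvd_of_dvd_pow hpqn))

theorem padicValNat_pow_mul_prod_pow {S : Finset ℕ} {h : ℕ → ℕ} {q n : ℕ} [hq : Fact q.Prime]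
    (hS : ∀ r ∈ S, r.Prime) (hqS : q ∉ S) : padicValNat q (q ^ n * ∏ r ∈ S, r ^ h r) = n :=
  padicValNat_pow_mul_of_not_dvd fun hd => hqS (mem_of_prime_dvd_prod_pow hS hq.out hd)

section Midy

variable {b N q t k : ℕ} [hq : Fact q.Prime]

theorem padicValNat_orderOf_le_of_dvd {M : ℕ} (hord : orderOf (b : ZMod N) = q ^ t * k)
    (hqk : ¬ q ∣ k) (hM : M ∣ N) : padicValNat q (orderOf (b : ZMod M)) ≤ t :=
  have hdvd := hord ▸ orderOf_natCast_dvd_of_dvd hM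
  (dvd_pow_mul_iff_padicValNat_le hqk hdvd).1 hdvd

theorem le_of_orderOf_natCast_eq_pow_mul {s : ℕ} (hb : 0 < b) (hN : N ≠ 0) (hco : N.Coprime b)
    (hord : orderOf (b : ZMod N) = q ^ t * k) (hqk : ¬ q ∣ k)
    (hqs : padicValNat q N - padicValNat q (b ^ orderOf (b : ZMod q) - 1) ≤ s)
    (hrs : ∀ r ∈ N.primeFactors, r ≠ q → padicValNat q (orderOf (b : ZMod r)) ≤ s) :
    t ≤ s := by
  have hdvd : orderOf (b : ZMod N) ∣ q ^ s * k := by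
    refine orderOf_natCast_dvd_of_forall_prime_pow hb fun r j hr hj hrj => ?_
    refine (dvd_pow_mul_iff_padicValNat_le hqk (hord ▸ orderOf_natCast_dvd_of_dvd hrj)).2 ?_
    have hrN : r ∈ N.primeFactors :=
      Nat.mem_primeFactors.2 ⟨hr, (dvd_pow_self r hj.ne').trans hrj, hN⟩
    have hbr : b.Coprime r := (hco.coprime_dvd_left (Nat.dvd_of_mem_primeFactors hrN)).symm
    by_cases hrq : r = q
    · subst hrq
      have hjN : j ≤ padicValNat r N := (padicValNat_dvd_iff_le hN).1 hrj
      have := padicValNat_orderOf_prime_pow_le_sub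
        ((Nat.Prime.coprime_iff_not_dvd hr).1 hbr.symm) j
      omega
    · have hqr : ¬ q ∣ r := fun h => hrq ((Nat.prime_dvd_prime_iff_eq hq.out hr).1 h).symm
      exact (padicValNat_orderOf_pow_le hqr hbr j).trans (hrs r hrN hrq)
  have := (dvd_pow_mul_iff_padicValNat_le (o := q ^ t * k) hqk dvd_rfl).1 (hord ▸ hdvd)
  rwa [padicValNat_pow_mul_of_not_dvd hqk] at this

theorem lt_padicValNat_orderOf_add {v p : ℕ} (hb : 0 < b) (hN : N ≠ 0) (hco : N.Coprime b)
    (hord : orderOf (b : ZMod N) = q ^ t * k) (hqk : ¬ q ∣ k)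
    (hp : 0 < padicValNat q (orderOf (b : ZMod p)))
    (hqp : (padicValNat q N : ℤ) - padicValNat q (b ^ orderOf (b : ZMod q) - 1) - v <
      padicValNat q (orderOf (b : ZMod p)))
    (hrp : ∀ r ∈ N.primeFactors, r ≠ q →
      (padicValNat q (orderOf (b : ZMod r)) : ℤ) - v < padicValNat q (orderOf (b : ZMod p))) :
    t < padicValNat q (orderOf (b : ZMod p)) + v := by
  have := le_of_orderOf_natCast_eq_pow_mul (s := padicValNat q (orderOf (b : ZMod p)) + v - 1)
    hb hN hco hord hqk (by omega) fun r hr hrq => by have := hrp r hr hrq; omega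
  omega

theorem midyProp_prime_pow_iff {v : ℕ} (hb : 0 < b) (hN : N ≠ 0) (hco : N.Coprime b)
    (hord : orderOf (b : ZMod N) = q ^ t * k) (hqk : ¬ q ∣ k) (htv : v ≤ t) :
    MidyProp b N (q ^ v) ↔ padicValNat q N ≤ v ∧
      ∀ p ∈ N.primeFactors, p ≠ q → t < padicValNat q (orderOf (b : ZMod p)) + v := by
  have hquot : orderOf (b : ZMod N) / q ^ v = q ^ (t - v) * k := by
    rw [hord, ← Nat.pow_sub_mul_pow q htv, mul_comm (q ^ (t - v)), mul_assoc,
      Nat.mul_div_cancel_left _ (pow_pos hq.out.pos v)]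
  have key : ∀ p ∈ N.primeFactors, p ∣ Nat.gcd (b ^ (orderOf (b : ZMod N) / q ^ v) - 1) N ↔
      padicValNat q (orderOf (b : ZMod p)) ≤ t - v := by
    intro p hp
    have hpN := Nat.dvd_of_mem_primeFactors hp
    rw [hquot, Nat.dvd_gcd_iff, dvd_pow_sub_one_iff_orderOf_dvd hb, and_iff_left hpN]
    exact dvd_pow_mul_iff_padicValNat_le hqk (hord ▸ orderOf_natCast_dvd_of_dvd hpN)
  constructor
  · intro hM
    refine ⟨?_, fun p hp hpq => ?_⟩
    · by_cases hqN : q ∣ N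
      · have hqb : ¬ q ∣ b :=
          (Nat.Prime.coprime_iff_not_dvd hq.out).1 (hco.coprime_dvd_left hqN)
        have hq0 : padicValNat q (orderOf (b : ZMod q)) = 0 :=
          padicValNat.eq_zero_of_not_dvd (not_dvd_orderOf_natCast hqb)
        have := hM q hq.out ((key q (Nat.mem_primeFactors.2 ⟨hq.out, hqN, hN⟩)).2 (by omega))
        rwa [padicValNat.prime_pow] at this
      · rw [padicValNat.eq_zero_of_not_dvd hqN]
        exact Nat.zero_le v
    · have hp' := Nat.prime_of_mem_primeFactors hp
      by_contra hle
      have := hM p hp' ((key p hp).2 (by omega))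
      rw [padicValNat.eq_zero_of_not_dvd fun h =>
        hpq ((Nat.prime_dvd_prime_iff_eq hp' hq.out).1 (hp'.dvd_of_dvd_pow h))] at this
      have := padicValNat_pos_of_mem_primeFactors hp
      omega
  · rintro ⟨hqv, hlt⟩ p hp hpd
    have hpN : p ∈ N.primeFactors :=
      Nat.mem_primeFactors.2 ⟨hp, hpd.trans (Nat.gcd_dvd_right _ _), hN⟩
    by_cases hpq : p = q
    · subst hpq
      rwa [padicValNat.prime_pow]
    · have := (key p hpN).1 hpd
      have := hlt p hpN hpq
      omega

theorem nonempty_primeFactors_erase {v : ℕ} (hb : 1 < b) (hN : 1 < N) (hco : N.Coprime b)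
    (hord : orderOf (b : ZMod N) = q ^ t * k) (hqk : ¬ q ∣ k) (htv : v ≤ t)
    (hqv : padicValNat q N ≤ v) : (N.primeFactors.erase q).Nonempty := by
  by_contra hS
  rw [not_nonempty_iff_eq_empty] at hS
  have hqN : q ∈ N.primeFactors := by
    obtain ⟨p, hp⟩ := Nat.nonempty_primeFactors.2 hN
    by_contra hqN
    have : p ∈ N.primeFactors.erase q := mem_erase.2 ⟨fun h => hqN (h ▸ hp), hp⟩
    simp [hS] at this
  have hqb : ¬ q ∣ b := (Nat.Prime.coprime_iff_not_dvd hq.out).1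
    (hco.coprime_dvd_left (Nat.dvd_of_mem_primeFactors hqN))
  have hm := one_le_padicValNat_pow_orderOf_sub_one hb hqb
  have hn := padicValNat_pos_of_mem_primeFactors hqN
  -- `N` is a power of `q`, so `t ≤ ν_q(N) - m < ν_q(N) ≤ v`
  have ht := le_of_orderOf_natCast_eq_pow_mul (by omega) (by omega) hco hord hqk le_rfl
    fun r hr hrq => absurd (mem_erase.2 ⟨hrq, hr⟩) (hS ▸ notMem_empty r)
  omega

end Midy

theorem stmt7_general (b N q v t k : ℕ) (hb : 1 < b) (hN : 1 < N) (hco : Nat.Coprime N b)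
    (hq : q.Prime)
    (hord : orderOf (b : ZMod N) = q ^ t * k) (hqk : ¬ q ∣ k) (htv : v ≤ t) :
    MidyProp b N (q ^ v) ↔
      ∃ (n : ℕ) (S : Finset ℕ) (h : ℕ → ℕ),
        n ≤ v ∧ S.Nonempty ∧
        (∀ p ∈ S, p.Prime ∧ p ≠ q ∧ 0 < h p) ∧
        N = q ^ n * ∏ p ∈ S, p ^ h p ∧
        (∀ p ∈ S, 0 < padicValNat q (orderOf (b : ZMod p))) ∧
        (∀ p' ∈ S,
          ((n : ℤ) - padicValNat q (b ^ orderOf (b : ZMod q) - 1) - v <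
              (padicValNat q (orderOf (b : ZMod p')) : ℤ)) ∧
          ∀ p ∈ S, (padicValNat q (orderOf (b : ZMod p)) : ℤ) - v <
              (padicValNat q (orderOf (b : ZMod p')) : ℤ)) := by
  have : Fact q.Prime := ⟨hq⟩
  rw [midyProp_prime_pow_iff (by omega) (by omega) hco hord hqk htv]
  constructor
  · rintro ⟨hqv, hlt⟩
    refine ⟨_, _, fun p => padicValNat p N, hqv,
      nonempty_primeFactors_erase hb hN hco hord hqk htv hqv,
      fun p hp => ⟨Nat.prime_of_mem_primeFactors (mem_of_mem_erase hp), ne_of_mem_erase hp,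
        padicValNat_pos_of_mem_primeFactors (mem_of_mem_erase hp)⟩,
      eq_pow_padicValNat_mul_prod_erase hq (by omega), fun p hp => ?_,
      fun p' hp' => ⟨?_, fun p hp => ?_⟩⟩
    · have := hlt p (mem_of_mem_erase hp) (ne_of_mem_erase hp)
      omega
    · have := hlt p' (mem_of_mem_erase hp') (ne_of_mem_erase hp')
      omega
    · have := hlt p' (mem_of_mem_erase hp') (ne_of_mem_erase hp')
      have := padicValNat_orderOf_le_of_dvd (b := b) hord hqk
        (Nat.dvd_of_mem_primeFactors (mem_of_mem_erase hp))
      omega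
  · rintro ⟨n, S, h, hnv, -, hS, hNS, hpos, hineq⟩
    have hSprime : ∀ r ∈ S, r.Prime := fun r hr => (hS r hr).1
    have hqN : padicValNat q N = n :=
      hNS ▸ padicValNat_pow_mul_prod_pow hSprime fun hqS => (hS q hqS).2.1 rfl
    have hmemS : ∀ p ∈ N.primeFactors, p ≠ q → p ∈ S := fun p hp hpq =>
      mem_of_prime_dvd_pow_mul_prod hq hSprime (Nat.prime_of_mem_primeFactors hp) hpq
        (hNS ▸ Nat.dvd_of_mem_primeFactors hp)
    refine ⟨hqN ▸ hnv, fun p hp hpq => ?_⟩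
    have hpS := hmemS p hp hpq
    exact lt_padicValNat_orderOf_add (by omega) (by omega) hco hord hqk (hpos p hpS)
      (hqN ▸ (hineq p hpS).1) fun r hr hrq => (hineq p hpS).2 r (hmemS r hr hrq)

/-- `q^v ∈ M_b(N)` iff `N = q^n·p₁^{h₁}⋯p_l^{h_l}` with distinct primes
`p_i ≠ q`, `0 ≤ n ≤ v`, `ν_q(ord_{p_i}(b)) > 0`, and
`max{n − m, max_i ν_q(ord_{p_i}(b))} − v < min_i ν_q(ord_{p_i}(b))`,
where `m = ν_q(b^{ord_q(b)} − 1)`. -/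
theorem stmt7 (b N q v t k : ℕ) (hb : 1 < b) (hN : 1 < N) (hco : Nat.Coprime N b)
    (hq : q.Prime) (hv : 0 < v)
    (hord : orderOf (b : ZMod N) = q ^ t * k) (hqk : ¬ q ∣ k) (htv : v ≤ t) :
    MidyProp b N (q ^ v) ↔
      ∃ (n : ℕ) (S : Finset ℕ) (h : ℕ → ℕ),
        n ≤ v ∧ S.Nonempty ∧
        (∀ p ∈ S, p.Prime ∧ p ≠ q ∧ 0 < h p) ∧
        N = q ^ n * ∏ p ∈ S, p ^ h p ∧
        (∀ p ∈ S, 0 < padicValNat q (orderOf (b : ZMod p))) ∧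
        (∀ p' ∈ S,
          ((n : ℤ) - padicValNat q (b ^ orderOf (b : ZMod q) - 1) - v <
              (padicValNat q (orderOf (b : ZMod p')) : ℤ)) ∧
          ∀ p ∈ S, (padicValNat q (orderOf (b : ZMod p)) : ℤ) - v <
              (padicValNat q (orderOf (b : ZMod p')) : ℤ)) :=
  stmt7_general b N q v t k hb hN hco hq hord hqk htv
end

section
/- Let N > 1, b > 1 with gcd(N,b)=1, and let q be a prime dividing ord_N(b) with gcd(N,q)=1. Then q ∈ M_b(N) if and only if ν_q(ord_p(b)) = ν_q(ord_N(b)) for every prime p dividing N. -/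
private lemma aux_dvd_div {q e d : ℕ} (hq : q.Prime) (he : e ≠ 0) (hd : d ≠ 0)
    (hqe : q ∣ e) (hde : d ∣ e) :
    d ∣ e / q ↔ d.factorization q < e.factorization q := by
  have heq : e / q ≠ 0 := (Nat.div_pos (Nat.le_of_dvd (Nat.pos_of_ne_zero he) hqe) hq.pos).ne'
  have hfq : 0 < e.factorization q := hq.factorization_pos_of_dvd he hqe
  rw [← Nat.factorization_prime_le_iff_dvd hd heq]
  have hdiv : ∀ p : ℕ, (e / q).factorization p
      = e.factorization p - (Finsupp.single q 1) p := by
    intro p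
    rw [Nat.factorization_div hqe, hq.factorization, Finsupp.tsub_apply]
  constructor
  · intro h
    have := h q hq
    rw [hdiv q, Finsupp.single_apply, if_pos rfl] at this
    omega
  · intro h p hp
    rw [hdiv p, Finsupp.single_apply]
    rcases eq_or_ne q p with rfl | hne
    · rw [if_pos rfl]; omega
    · rw [if_neg hne]
      have := (Nat.factorization_prime_le_iff_dvd hd he).2 hde p hp
      omega

/-- for a prime `q ∣ ord_N(b)` with `gcd(N,q)=1`, `q ∈ M_b(N)` iff
`ν_q(ord_p(b)) = ν_q(ord_N(b))` for every prime `p ∣ N`. -/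
theorem stmt8 (b N q : ℕ) (hb : 1 < b) (hN : 1 < N) (hco : Nat.Coprime N b)
    (hq : q.Prime) (hqord : q ∣ orderOf (b : ZMod N)) (hqN : Nat.Coprime N q) :
    MidyProp b N q ↔
      ∀ p, p.Prime → p ∣ N →
        padicValNat q (orderOf (b : ZMod p)) = padicValNat q (orderOf (b : ZMod N)) := by
  have hN0 : N ≠ 0 := by omega
  haveI : NeZero N := ⟨hN0⟩
  set e := orderOf (b : ZMod N) with he_def
  -- e is positive
  have hbu : IsUnit (b : ZMod N) := (ZMod.isUnit_iff_coprime b N).2 hco.symm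
  have he0 : e ≠ 0 := by
    obtain ⟨u, hu⟩ := hbu
    have : orderOf ((u : ZMod N)) = orderOf u := orderOf_units
    rw [he_def, ← hu, this]
    exact (orderOf_pos u).ne'
  set k := e / q with hk_def
  have hk0 : k ≠ 0 :=
    (Nat.div_pos (Nat.le_of_dvd (Nat.pos_of_ne_zero he0) hqord) hq.pos).ne'
  have hbk : 1 ≤ b ^ k := Nat.one_le_pow _ _ (by omega)
  have hqndvd : ¬ q ∣ N := (hq.coprime_iff_not_dvd).1 hqN.symm
  -- facts about orders mod p, for p prime dividing N
  have hord_dvd : ∀ p : ℕ, p.Prime → p ∣ N → orderOf (b : ZMod p) ∣ e := by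
    intro p hp hpN
    apply orderOf_dvd_of_pow_eq_one
    have h1 : ((b : ZMod N) ^ e) = 1 := pow_orderOf_eq_one _
    have h2 : (ZMod.castHom hpN (ZMod p)) ((b : ZMod N) ^ e) = (b : ZMod p) ^ e := by
      rw [map_pow, map_natCast]
    rw [h1, map_one] at h2
    exact h2.symm
  have hord_pos : ∀ p : ℕ, p.Prime → p ∣ N → orderOf (b : ZMod p) ≠ 0 := by
    intro p hp hpN
    haveI : Fact p.Prime := ⟨hp⟩
    have hcop : Nat.Coprime b p := (Nat.Coprime.coprime_dvd_left hpN hco).symm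
    obtain ⟨u, hu⟩ := (ZMod.isUnit_iff_coprime b p).2 hcop
    rw [← hu, orderOf_units]
    exact (orderOf_pos u).ne'
  -- p ∣ b^k - 1 ↔ ord_p(b) ∣ k
  have key : ∀ p : ℕ, p.Prime → p ∣ N → (p ∣ b ^ k - 1 ↔ orderOf (b : ZMod p) ∣ k) := by
    intro p hp hpN
    haveI : Fact p.Prime := ⟨hp⟩
    rw [orderOf_dvd_iff_pow_eq_one, ← ZMod.natCast_eq_zero_iff,
      Nat.cast_sub hbk, Nat.cast_pow, Nat.cast_one, sub_eq_zero]
  -- MidyProp ↔ ∀ prime p ∣ N, ¬ p ∣ b^k - 1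
  have hmidy : MidyProp b N q ↔ ∀ p : ℕ, p.Prime → p ∣ N → ¬ p ∣ b ^ k - 1 := by
    constructor
    · intro hM p hp hpN hpbk
      have hgcd : p ∣ Nat.gcd (b ^ k - 1) N := Nat.dvd_gcd hpbk hpN
      have hle := hM p hp hgcd
      have hpq : p ≠ q := by rintro rfl; exact hqndvd hpN
      have h0 : padicValNat p q = 0 := by
        apply padicValNat.eq_zero_of_not_dvd
        intro h
        exact hpq ((Nat.prime_dvd_prime_iff_eq hp hq).1 h)
      have h1 : 1 ≤ padicValNat p N := by
        rw [← Nat.factorization_def _ hp]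
        exact hp.factorization_pos_of_dvd hN0 hpN
      omega
    · intro h p hp hgcd
      exact absurd (hgcd.trans (Nat.gcd_dvd_left _ _))
        (h p hp (hgcd.trans (Nat.gcd_dvd_right _ _)))
  rw [hmidy]
  -- now convert per-prime
  apply forall_congr'; intro p
  apply forall_congr'; intro hp
  apply forall_congr'; intro hpN
  rw [key p hp hpN,
    aux_dvd_div hq he0 (hord_pos p hp hpN) hqord (hord_dvd p hp hpN),
    Nat.factorization_def _ hq, Nat.factorization_def _ hq]
  have hle : padicValNat q (orderOf (b : ZMod p)) ≤ padicValNat q e := by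
    rw [← Nat.factorization_def _ hq, ← Nat.factorization_def _ hq]
    exact (Nat.factorization_prime_le_iff_dvd (hord_pos p hp hpN) he0).2
      (hord_dvd p hp hpN) q hq
  omega
end

section
/- Let N > 1, b > 1 with gcd(N,b)=1, and let q be a prime dividing both ord_N(b) and N. Then q ∈ M_b(N) if and only if q² does not divide N and ν_q(ord_p(b)) = ν_q(ord_N(b)) for every prime p dividing N with p ≠ q. -/
theorem dvd_pow_sub_one_iff (b m n : ℕ) (hb : 1 ≤ b) (hn : n ≠ 0) :
    n ∣ b ^ m - 1 ↔ ((b : ZMod n)) ^ m = 1 := by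
  haveI : NeZero n := ⟨hn⟩
  rw [← ZMod.natCast_eq_zero_iff]
  rw [Nat.cast_sub (Nat.one_le_pow _ _ hb), Nat.cast_pow, Nat.cast_one, sub_eq_zero]

theorem order_dvd_order (b N p : ℕ) (hp : p ∣ N) :
    orderOf ((b:ℕ) : ZMod p) ∣ orderOf ((b:ℕ) : ZMod N) := by
  apply orderOf_dvd_of_pow_eq_one
  have h2 : (ZMod.castHom hp (ZMod p)) ((b : ZMod N) ^ orderOf ((b:ℕ) : ZMod N)) = 1 := by
    rw [pow_orderOf_eq_one, map_one]
  rwa [map_pow, map_natCast] at h2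

theorem order_pos (b N : ℕ) (hN : 1 < N) (hco : Nat.Coprime N b) :
    0 < orderOf ((b:ℕ) : ZMod N) := by
  haveI : NeZero N := ⟨by omega⟩
  have : IsUnit ((b:ℕ) : ZMod N) := (ZMod.isUnit_iff_coprime b N).2 hco.symm
  obtain ⟨u, hu⟩ := this
  haveI : Fact (1 < N) := ⟨hN⟩
  rw [← hu, orderOf_units]
  exact orderOf_pos u

-- order mod prime q coprime to q
theorem order_coprime (b q : ℕ) (hq : q.Prime) (hco : Nat.Coprime q b) :
    ¬ q ∣ orderOf ((b:ℕ) : ZMod q) := by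
  haveI : Fact q.Prime := ⟨hq⟩
  have hu : IsUnit ((b:ℕ) : ZMod q) := (ZMod.isUnit_iff_coprime b q).2 hco.symm
  obtain ⟨u, hu⟩ := hu
  rw [← hu, orderOf_units]
  have hdvd : orderOf u ∣ Fintype.card (ZMod q)ˣ := orderOf_dvd_card
  rw [ZMod.card_units_eq_totient, Nat.totient_prime hq] at hdvd
  intro h
  have h2 := h.trans hdvd
  have hq2 := hq.two_le
  have := Nat.le_of_dvd (by omega) h2
  omega
theorem val_eq_iff_not_dvd_div {q d e : ℕ} (hq : q.Prime) (hd : d ≠ 0) (he : e ≠ 0)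
    (hde : d ∣ e) (hqe : q ∣ e) :
    padicValNat q d = padicValNat q e ↔ ¬ d ∣ e / q := by
  have hk : e / q ≠ 0 := by
    have := Nat.div_pos (Nat.le_of_dvd (Nat.pos_of_ne_zero he) hqe) hq.pos
    omega
  have hfk : (e / q).factorization q = e.factorization q - 1 := by
    rw [Nat.factorization_div hqe, Finsupp.tsub_apply, Nat.Prime.factorization_self hq]
  have h1 : 1 ≤ e.factorization q := hq.factorization_pos_of_dvd he hqe
  rw [← Nat.factorization_def d hq, ← Nat.factorization_def e hq]
  constructor
  · intro heq hdk
    have := Finsupp.le_def.1 ((Nat.factorization_le_iff_dvd hd hk).2 hdk) q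
    rw [hfk] at this; omega
  · intro hnd
    by_contra hne
    have hlt : d.factorization q < e.factorization q :=
      lt_of_le_of_ne (Finsupp.le_def.1 ((Nat.factorization_le_iff_dvd hd he).2 hde) q) hne
    apply hnd
    rw [← Nat.factorization_le_iff_dvd hd hk]
    rw [Finsupp.le_def]
    intro r
    rcases eq_or_ne r q with rfl | hr
    · rw [hfk]; omega
    · have hle : d.factorization r ≤ e.factorization r :=
        Finsupp.le_def.1 ((Nat.factorization_le_iff_dvd hd he).2 hde) r
      have heq2 : e.factorization r = (e/q).factorization r := by
        conv_lhs => rw [← Nat.div_mul_cancel hqe]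
        rw [Nat.factorization_mul hk hq.pos.ne', Finsupp.add_apply, Nat.Prime.factorization hq,
          Finsupp.single_apply, if_neg (fun h => hr h.symm), add_zero]
      omega

/-- for a prime `q` dividing both `ord_N(b)` and `N`, `q ∈ M_b(N)` iff
`q² ∤ N` and `ν_q(ord_p(b)) = ν_q(ord_N(b))` for every prime `p ∣ N`, `p ≠ q`. -/
theorem stmt9 (b N q : ℕ) (hb : 1 < b) (hN : 1 < N) (hco : Nat.Coprime N b)
    (hq : q.Prime) (hqord : q ∣ orderOf (b : ZMod N)) (hqN : q ∣ N) :
    MidyProp b N q ↔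
      (¬ q ^ 2 ∣ N ∧
        ∀ p, p.Prime → p ∣ N → p ≠ q →
          padicValNat q (orderOf (b : ZMod p)) =
            padicValNat q (orderOf (b : ZMod N))) := by
  haveI : NeZero N := ⟨by omega⟩
  set e := orderOf ((b : ℕ) : ZMod N) with he_def
  have he : 0 < e := order_pos b N hN hco
  set k := e / q with hk_def
  have hk : 0 < k := Nat.div_pos (Nat.le_of_dvd he hqord) hq.pos
  have hqb : Nat.Coprime q b := Nat.Coprime.coprime_dvd_left hqN hco
  have hoq : orderOf ((b : ℕ) : ZMod q) ∣ k := by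
    have h1 : orderOf ((b : ℕ) : ZMod q) ∣ e := order_dvd_order b N q hqN
    have h2 : ¬ q ∣ orderOf ((b : ℕ) : ZMod q) := order_coprime b q hq hqb
    have hco2 : (orderOf ((b : ℕ) : ZMod q)).Coprime q :=
      ((hq.coprime_iff_not_dvd).2 h2).symm
    have h3 : e = k * q := (Nat.div_mul_cancel hqord).symm
    rw [h3] at h1
    exact hco2.dvd_of_dvd_mul_right h1
  have hqdvd : q ∣ b ^ k - 1 :=
    (dvd_pow_sub_one_iff b k q (by omega) hq.pos.ne').2 (orderOf_dvd_iff_pow_eq_one.1 hoq)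
  have hpval : ∀ p, p.Prime → (p ∣ b ^ k - 1 ↔ orderOf ((b : ℕ) : ZMod p) ∣ k) := by
    intro p pp
    rw [dvd_pow_sub_one_iff b k p (by omega) pp.pos.ne', orderOf_dvd_iff_pow_eq_one]
  constructor
  · intro hM
    constructor
    · intro hq2
      have hle := hM q hq (Nat.dvd_gcd hqdvd hqN)
      rw [padicValNat.self hq.one_lt] at hle
      have h2 : 2 ≤ padicValNat q N := by
        rw [← Nat.factorization_def N hq]
        exact (Nat.Prime.pow_dvd_iff_le_factorization hq (by omega)).1 hq2
      omega
    · intro p pp hpN hpq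
      have hop_dvd : orderOf ((b : ℕ) : ZMod p) ∣ e := order_dvd_order b N p hpN
      have hop_pos : 0 < orderOf ((b : ℕ) : ZMod p) :=
        order_pos b p pp.one_lt (hco.coprime_dvd_left hpN)
      rw [val_eq_iff_not_dvd_div hq hop_pos.ne' he.ne' hop_dvd hqord]
      intro hdk
      have hpdvd : p ∣ b ^ k - 1 := (hpval p pp).2 hdk
      have hle := hM p pp (Nat.dvd_gcd hpdvd hpN)
      have hz : padicValNat p q = 0 :=
        padicValNat.eq_zero_of_not_dvd
          (fun h => hpq ((Nat.prime_dvd_prime_iff_eq pp hq).1 h))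
      have h1 : 1 ≤ padicValNat p N := by
        rw [← Nat.factorization_def N pp]
        exact pp.factorization_pos_of_dvd (by omega) hpN
      omega
  · rintro ⟨h2, hval⟩ p pp hpg
    have hpN' : p ∣ N := hpg.trans (Nat.gcd_dvd_right _ _)
    have hpb : p ∣ b ^ k - 1 := hpg.trans (Nat.gcd_dvd_left _ _)
    rcases eq_or_ne p q with rfl | hpq
    · rw [padicValNat.self hq.one_lt]
      by_contra hle
      push_neg at hle
      apply h2
      rw [Nat.Prime.pow_dvd_iff_le_factorization hq (by omega : N ≠ 0),
        Nat.factorization_def N hq]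
      omega
    · exfalso
      have hop_dvd : orderOf ((b : ℕ) : ZMod p) ∣ e := order_dvd_order b N p hpN'
      have hop_pos : 0 < orderOf ((b : ℕ) : ZMod p) :=
        order_pos b p pp.one_lt (hco.coprime_dvd_left hpN')
      have hnd := (val_eq_iff_not_dvd_div hq hop_pos.ne' he.ne' hop_dvd hqord).1
        (hval p pp hpN' hpq)
      exact hnd ((hpval p pp).1 hpb)
end

section
/- Let q be a prime, v a positive integer, and b > 1. If N is the smallest integer greater than 1 with gcd(N,b)=1 such that q^v divides ord_N(b) and q^v ∈ M_b(N), then N is a prime and N ≡ 1 (mod q^v). -/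
lemma key_dvd (b m n : ℕ) (hb : 0 < b) :
    orderOf (b : ZMod m) ∣ n ↔ m ∣ b ^ n - 1 := by
  rw [orderOf_dvd_iff_pow_eq_one, ← ZMod.natCast_eq_zero_iff,
    Nat.cast_sub (Nat.one_le_pow _ _ hb), Nat.cast_pow, Nat.cast_one, sub_eq_zero]

lemma ord_dvd_totient (b m : ℕ) (hb : 0 < b) (h : Nat.Coprime b m) :
    orderOf (b : ZMod m) ∣ m.totient := by
  rw [key_dvd _ _ _ hb]
  exact (Nat.modEq_iff_dvd' (Nat.one_le_pow _ _ hb)).mp (Nat.ModEq.pow_totient h).symm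

lemma ord_pos (b m : ℕ) (hb : 0 < b) (hm : 1 < m) (h : Nat.Coprime b m) :
    0 < orderOf (b : ZMod m) := by
  have hd := ord_dvd_totient b m hb h
  have ht : 0 < m.totient := Nat.totient_pos.mpr (by omega)
  exact Nat.pos_of_ne_zero (fun h0 => by simp [h0] at hd; omega)

lemma ord_dvd_ord (b m m' : ℕ) (hb : 0 < b) (hm' : m' ∣ m) :
    orderOf (b : ZMod m') ∣ orderOf (b : ZMod m) := by
  rw [key_dvd _ _ _ hb]
  exact dvd_trans hm' ((key_dvd b m _ hb).mp dvd_rfl)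


/-- the smallest `N > 1` coprime to `b` with `q^v ∣ ord_N(b)` and
`q^v ∈ M_b(N)` is a prime congruent to `1` mod `q^v`. -/
theorem stmt10 (b q v N : ℕ) (hb : 1 < b) (hq : q.Prime) (hv : 0 < v)
    (hN : 1 < N) (hco : Nat.Coprime N b)
    (hdvd : q ^ v ∣ orderOf (b : ZMod N)) (hM : MidyProp b N (q ^ v))
    (hmin : ∀ M, 1 < M → Nat.Coprime M b → q ^ v ∣ orderOf (b : ZMod M) →
      MidyProp b M (q ^ v) → N ≤ M) :
    N.Prime ∧ N % q ^ v = 1 := by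
  have hb0 : 0 < b := by omega
  have hN0 : N ≠ 0 := by omega
  have hq2 : 2 ≤ q := hq.two_le
  have hqv1 : 1 < q ^ v := Nat.one_lt_pow (by omega) hq.one_lt
  set D := orderOf (b : ZMod N) with hD
  have hDpos : 0 < D := ord_pos b N hb0 hN hco.symm
  -- Step A : find a prime power p^e exactly dividing N with q^v ∣ ord_{p^e}(b)
  have hA : ∃ p : ℕ, p.Prime ∧ p ∣ N ∧
      q ^ v ∣ orderOf (b : ZMod (p ^ N.factorization p)) := by
    by_contra hcon
    push_neg at hcon
    obtain ⟨L, hL⟩ : q ∣ D := dvd_trans (dvd_pow_self q (by omega)) hdvd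
    have hLne : L ≠ 0 := by rintro rfl; omega
    have hLD : L < D := by
      rw [hL]
      exact lt_mul_of_one_lt_left (Nat.pos_of_ne_zero hLne) hq.one_lt
    have hkey : ∀ p : ℕ, p.Prime → p ∣ N →
        orderOf (b : ZMod (p ^ N.factorization p)) ∣ L := by
      intro p pp hpN
      have hd : orderOf (b : ZMod (p ^ N.factorization p)) ∣ D :=
        ord_dvd_ord b N _ hb0 (Nat.ordProj_dvd N p)
      set d := orderOf (b : ZMod (p ^ N.factorization p)) with hdd
      have hdne : d ≠ 0 := by
        rintro h0; rw [h0] at hd; exact absurd (zero_dvd_iff.mp hd) (by omega)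
      have hnd : ¬ q ^ v ∣ d := hcon p pp hpN
      rw [← Nat.factorization_le_iff_dvd hdne hLne, Finsupp.le_def]
      intro r
      have h1 : d.factorization r ≤ D.factorization r :=
        Finsupp.le_def.mp ((Nat.factorization_le_iff_dvd hdne (by omega)).mpr hd) r
      have hDfac : D.factorization = q.factorization + L.factorization := by
        rw [hL, Nat.factorization_mul (by omega) hLne]
      by_cases hrq : r = q
      · subst hrq
        have h2 : d.factorization r < v := by
          by_contra h3
          exact hnd ((Nat.Prime.pow_dvd_iff_le_factorization hq hdne).mpr (by omega))
        have h4 : v ≤ D.factorization r :=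
          (Nat.Prime.pow_dvd_iff_le_factorization hq (by omega)).mp hdvd
        have h5 : D.factorization r = 1 + L.factorization r := by
          rw [hDfac]; simp [hq.factorization]
        omega
      · have h5 : q.factorization r = 0 := by
          simp [hq.factorization, Finsupp.single_apply, Ne.symm hrq]
        have := hDfac ▸ h1
        simp only [Finsupp.add_apply, h5, zero_add] at this
        exact this
    have hbL : b ^ L - 1 ≠ 0 := by
      have h2 : 2 ≤ b ^ L := le_trans hb (Nat.le_self_pow hLne b)
      omega
    have hNd : N ∣ b ^ L - 1 := by
      rw [← Nat.factorization_le_iff_dvd hN0 hbL, Finsupp.le_def]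
      intro p
      by_cases pp : p.Prime
      · by_cases hpN : p ∣ N
        · exact (Nat.Prime.pow_dvd_iff_le_factorization pp hbL).mp
            ((key_dvd b _ L hb0).mp (hkey p pp hpN))
        · simp [Nat.factorization_eq_zero_of_not_dvd hpN]
      · simp [Nat.factorization_eq_zero_of_not_prime _ pp]
    have : D ∣ L := (key_dvd b N L hb0).mpr hNd
    exact absurd (Nat.le_of_dvd (Nat.pos_of_ne_zero hLne) this) (by omega)
  obtain ⟨p, pp, hpN, hpord⟩ := hA
  set e := N.factorization p with he
  have he1 : 0 < e := pp.factorization_pos_of_dvd hN0 hpN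
  have hcoe : Nat.Coprime b (p ^ e) :=
    (hco.symm).coprime_dvd_right (Nat.ordProj_dvd N p)
  by_cases hpq : p = q
  · -- Step B : impossible
    exfalso
    subst hpq
    have hcop : Nat.Coprime b p := (hco.symm).coprime_dvd_right hpN
    have hop : orderOf (b : ZMod p) ∣ p - 1 := by
      have := ord_dvd_totient b p hb0 hcop
      rwa [Nat.totient_prime hq] at this
    have hopos : 0 < orderOf (b : ZMod p) := ord_pos b p hb0 hq.one_lt hcop
    have h3 : Nat.Coprime (orderOf (b : ZMod p)) (p ^ v) := by
      apply Nat.Coprime.pow_right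
      rw [Nat.coprime_comm]
      refine (Nat.Prime.coprime_iff_not_dvd hq).mpr (fun hdq => ?_)
      have h1 := Nat.le_of_dvd hopos hdq
      have h2 := Nat.le_of_dvd (by omega) hop
      omega
    have h4 : orderOf (b : ZMod p) ∣ D / p ^ v := by
      refine (Nat.Coprime.dvd_of_dvd_mul_right h3) ?_
      rw [Nat.div_mul_cancel hdvd]
      exact ord_dvd_ord b N p hb0 hpN
    have hqk : p ∣ b ^ (D / p ^ v) - 1 := (key_dvd b p _ hb0).mp h4
    have hev : e ≤ v := by
      have h6 := hM p hq (Nat.dvd_gcd hqk hpN)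
      rwa [← Nat.factorization_def N hq, ← he, ← Nat.factorization_def _ hq,
        hq.factorization_pow, Finsupp.single_apply, if_pos rfl] at h6
    have h5 : p ^ v ∣ p ^ (e - 1) * (p - 1) := by
      have := hpord.trans (ord_dvd_totient b (p ^ e) hb0 hcoe)
      rwa [Nat.totient_prime_pow hq he1] at this
    have h6 : p ^ v ∣ p ^ (e - 1) := by
      refine (Nat.Coprime.dvd_of_dvd_mul_right ?_) h5
      apply Nat.Coprime.pow_left
      refine (Nat.Prime.coprime_iff_not_dvd hq).mpr (fun hdq => ?_)
      have := Nat.le_of_dvd (by omega) hdq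
      omega
    have h7 : v ≤ e - 1 := (Nat.pow_dvd_pow_iff_le_right hq.one_lt).mp h6
    omega
  · -- Step C : N = p prime
    have hcop : Nat.Coprime b p := (hco.symm).coprime_dvd_right hpN
    have hopos : 0 < orderOf (b : ZMod p) := ord_pos b p hb0 pp.one_lt hcop
    have hordp_dvd : orderOf (b : ZMod (p ^ e)) ∣ orderOf (b : ZMod p) * p ^ (e - 1) := by
      rw [key_dvd _ _ _ hb0]
      have h1 : (p : ℤ) ∣ (b : ℤ) ^ orderOf (b : ZMod p) - 1 := by
        have h0 : p ∣ b ^ orderOf (b : ZMod p) - 1 := (key_dvd b p _ hb0).mp dvd_rfl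
        have := Int.natCast_dvd_natCast.mpr h0
        rwa [Nat.cast_sub (Nat.one_le_pow _ _ hb0), Nat.cast_pow, Nat.cast_one] at this
      have h2 := dvd_sub_pow_of_dvd_sub h1 (e - 1)
      rw [one_pow, ← pow_mul] at h2
      have h3 : e - 1 + 1 = e := by omega
      rw [h3] at h2
      have hle : 1 ≤ b ^ (orderOf (b : ZMod p) * p ^ (e - 1)) := Nat.one_le_pow _ _ hb0
      rw [← Int.natCast_dvd_natCast, Nat.cast_sub hle, Nat.cast_pow, Nat.cast_pow,
        Nat.cast_one]
      exact_mod_cast h2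
    have hqvp : q ^ v ∣ orderOf (b : ZMod p) := by
      refine (Nat.Coprime.dvd_of_dvd_mul_right ?_) (hpord.trans hordp_dvd)
      exact ((Nat.coprime_primes hq pp).mpr (Ne.symm hpq)).pow _ _
    have hMp : MidyProp b p (q ^ v) := by
      intro r hr hgr
      exfalso
      have hrp : r = p :=
        (Nat.prime_dvd_prime_iff_eq hr pp).mp (hgr.trans (Nat.gcd_dvd_right _ _))
      rw [hrp] at hgr
      have h6 : p ∣ b ^ (orderOf (b : ZMod p) / q ^ v) - 1 :=
        hgr.trans (Nat.gcd_dvd_left _ _)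
      have h7 : orderOf (b : ZMod p) ∣ orderOf (b : ZMod p) / q ^ v :=
        (key_dvd b p _ hb0).mpr h6
      have hk : 0 < orderOf (b : ZMod p) / q ^ v :=
        Nat.div_pos (Nat.le_of_dvd hopos hqvp) (by omega)
      have h8 := Nat.le_of_dvd hk h7
      have h9 := Nat.div_lt_self hopos hqv1
      omega
    have hle : N ≤ p := hmin p pp.one_lt (hco.coprime_dvd_left hpN) hqvp hMp
    have hNp : N = p := le_antisymm hle (Nat.le_of_dvd (by omega) hpN)
    subst hNp
    refine ⟨pp, ?_⟩
    obtain ⟨t, ht⟩ : q ^ v ∣ N - 1 := by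
      refine hqvp.trans ?_
      have := ord_dvd_totient b N hb0 hcop
      rwa [Nat.totient_prime pp] at this
    have hNeq : N = q ^ v * t + 1 := by omega
    rw [hNeq, Nat.mul_add_mod, Nat.mod_eq_of_lt hqv1]
end

section
/- Let b > 1, q a prime, and v ≥ 1. Then there exists a prime P with P ∤ b and q^v dividing ord_P(b); equivalently, some prime P satisfies that the multiplicative order of b modulo P is divisible by q^v. -/
/-!
With `c = b ^ q ^ (n + 1)`, the number `N = ∑_{i<q} c ^ i = Φ_{q^(n+2)}(b)` exceeds `q`, and `q²` does
not divide it: if `q ∣ N` then Fermat's little theorem forces `c ≡ 1 (mod q²)`, hence `N ≡ q (mod q²)`.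
So `N` has a prime factor `P ≠ q`. Modulo `P`, `c ^ q - 1 = N (c - 1) = 0`, while `c = 1` would give
`N ≡ q ≢ 0`; hence the order of `b` modulo `P` is exactly `q ^ (n + 2)`.
-/

open Finset

theorem orderOf_eq_prime_pow_of_geom_sum_eq_zero {R : Type*} [Ring R] {q : ℕ} [Fact q.Prime]
    (hq : (q : R) ≠ 0) {x : R} (n : ℕ) (h : ∑ i ∈ range q, (x ^ q ^ n) ^ i = 0) :
    orderOf x = q ^ (n + 1) := by
  apply orderOf_eq_prime_pow
  · intro hx
    simp only [hx, one_pow, sum_const, card_range, nsmul_eq_mul, mul_one] at h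
    exact hq h
  · rw [pow_succ, pow_mul, ← sub_eq_zero, ← geom_sum_mul, h, zero_mul]

theorem Nat.lt_geom_sum {c : ℕ} (hc : 1 < c) {n : ℕ} (hn : 2 ≤ n) :
    n < ∑ i ∈ range n, c ^ i := by
  calc n = ∑ _i ∈ range n, 1 := by simp
    _ < ∑ i ∈ range n, c ^ i :=
      sum_lt_sum (fun i _ => Nat.one_le_pow _ _ (by omega)) ⟨1, mem_range.2 hn, by simpa⟩

theorem Nat.exists_prime_ne_dvd_of_not_sq_dvd {q N : ℕ} (hq : q.Prime) (hN : q < N)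
    (hsq : ¬ q ^ 2 ∣ N) : ∃ P, P.Prime ∧ P ∣ N ∧ P ≠ q := by
  by_contra! h
  have hpow := Nat.eq_prime_pow_of_unique_prime_dvd (by omega) fun hP hPN => h _ hP hPN
  set k := N.primeFactorsList.length
  rcases Nat.lt_or_ge k 2 with hk | hk
  · have : N ≤ q := hpow ▸ (Nat.pow_le_pow_right hq.pos (by omega)).trans_eq (pow_one q)
    omega
  · exact hsq (hpow ▸ pow_dvd_pow q hk)

theorem Nat.not_sq_dvd_geom_sum_pow_prime {q : ℕ} (hq : q.Prime) (d : ℕ) :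
    ¬ q ^ 2 ∣ ∑ i ∈ range q, (d ^ q) ^ i := by
  have := Fact.mk hq
  intro hN
  -- Modulo `q` the sum is `∑ d ^ i`, so `d ^ q - 1 = 0` there, and `d = d ^ q = 1`.
  have hd : (d : ZMod q) = 1 := by
    have h0 := (ZMod.natCast_eq_zero_iff _ q).2 ((dvd_pow_self q two_ne_zero).trans hN)
    push_cast at h0
    simp only [ZMod.pow_card] at h0
    rw [← ZMod.pow_card (d : ZMod q), ← sub_eq_zero, ← geom_sum_mul, h0, zero_mul]
  have hdq : (q : ℤ) ^ 2 ∣ (d : ℤ) ^ q - 1 := by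
    have : (q : ℤ) ∣ d - 1 := by
      rw [← ZMod.intCast_zmod_eq_zero_iff_dvd]
      push_cast
      rw [hd, sub_self]
    simpa using dvd_sub_pow_of_dvd_sub this 1
  have hdq' : (d : ZMod (q ^ 2)) ^ q = 1 := by
    have := (ZMod.intCast_zmod_eq_zero_iff_dvd _ (q ^ 2)).2 (by exact_mod_cast hdq)
    push_cast at this
    exact sub_eq_zero.1 this
  have hq0 := (ZMod.natCast_eq_zero_iff _ (q ^ 2)).2 hN
  push_cast at hq0
  simp only [hdq', one_pow, sum_const, card_range, nsmul_eq_mul, mul_one] at hq0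
  have h := (ZMod.natCast_eq_zero_iff q (q ^ 2)).1 hq0
  have : 2 ≤ 1 := (Nat.pow_dvd_pow_iff_le_right hq.one_lt).1 (by rwa [pow_one])
  omega

theorem Nat.exists_prime_orderOf_natCast_eq_prime_pow {b q : ℕ} (hb : 1 < b) (hq : q.Prime)
    {n : ℕ} (hn : 2 ≤ n) : ∃ P, P.Prime ∧ orderOf (b : ZMod P) = q ^ n := by
  obtain ⟨m, rfl⟩ : ∃ m, n = m + 2 := ⟨n - 2, by omega⟩
  set N := ∑ i ∈ range q, (b ^ q ^ (m + 1)) ^ i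
  have hqN : q < N := Nat.lt_geom_sum (Nat.one_lt_pow (pow_ne_zero _ hq.ne_zero) hb) hq.two_le
  have hsq : ¬ q ^ 2 ∣ N := by
    simpa only [N, pow_succ, pow_mul] using Nat.not_sq_dvd_geom_sum_pow_prime hq (b ^ q ^ m)
  obtain ⟨P, hP, hPN, hPq⟩ := Nat.exists_prime_ne_dvd_of_not_sq_dvd hq hqN hsq
  have := Fact.mk hP
  have := Fact.mk hq
  refine ⟨P, hP, orderOf_eq_prime_pow_of_geom_sum_eq_zero ?_ (m + 1) ?_⟩
  · rw [Ne, ZMod.natCast_eq_zero_iff, Nat.prime_dvd_prime_iff_eq hP hq]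
    exact hPq
  · exact_mod_cast (ZMod.natCast_eq_zero_iff N P).2 hPN

theorem stmt15_general (b q v : ℕ) (hb : 1 < b) (hq : q.Prime) :
    ∃ P : ℕ, P.Prime ∧ ¬ P ∣ b ∧ q ^ v ∣ orderOf (b : ZMod P) := by
  obtain ⟨P, hP, hord⟩ :=
    Nat.exists_prime_orderOf_natCast_eq_prime_pow hb hq (n := v + 2) (by omega)
  have := Fact.mk hP
  refine ⟨P, hP, fun hPb => ?_, hord ▸ pow_dvd_pow q (by omega)⟩
  rw [(ZMod.natCast_eq_zero_iff b P).2 hPb, orderOf_zero] at hord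
  exact pow_ne_zero _ hq.ne_zero hord.symm

/-- for `b > 1`, a prime `q` and `v ≥ 1`, there is a prime `P ∤ b` with
`q^v` dividing the multiplicative order of `b` mod `P`. -/
theorem stmt15 (b q v : ℕ) (hb : 1 < b) (hq : q.Prime) (hv : 1 ≤ v) :
    ∃ P : ℕ, P.Prime ∧ ¬ P ∣ b ∧ q ^ v ∣ orderOf (b : ZMod P) :=
  stmt15_general b q v hb hq
end
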